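/- arXiv:1708.05357 — 2 statements merged into one kernel-verified Lean document; each statement's English description precedes it below -/
import Mathlib

section
/- (Single-coordinate exact coordinate descent, strongly convex case.) Consider exact coordinate descent (block size m = 1, θ = 1) on O(α) = f(Aα) + Σ_i g_i(α_i), where f is convex and L-smooth, each g_i is μ-strongly convex with μ > 0, and the column norms satisfy ‖a_i‖ ≤ R for all i. Then E_j[ε⁽ᵗ⁾ | α⁽⁰⁾] ≤ (1 − ρ_min·(μ/(μ + LR²))·(1/n))ᵗ · ε⁽⁰⁾, where ρ_min := min_t E_j[ρ_{t,j} | α⁽ᵗ⁾], ρ_{t,j} := gap_j(α_j⁽ᵗ⁾)/((1/n)Σ_{i=1}^n gap_i(α_i⁽ᵗ⁾)), and expectations are over the (possibly non-uniform) random choice of the coordinate j updated in each round. -/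
/-!
STATEMENT 6: exact single-coordinate coordinate descent (block size `m = 1`, `θ = 1`) on
`O(α) = f(Aα) + Σᵢ gᵢ(αᵢ)` with `f` convex `L`-smooth, `gᵢ` `μ`-strongly convex (`μ > 0`)
and `‖aᵢ‖ ≤ R`:
`E_j[ε⁽ᵗ⁾ | α⁽⁰⁾] ≤ (1 − ρ_min (μ/(μ + LR²)) (1/n))ᵗ ε⁽⁰⁾`, with
`ρ_{t,j} := gap_j(α_j⁽ᵗ⁾)/((1/n) Σᵢ gapᵢ(αᵢ⁽ᵗ⁾))` and
`ρ_min := min_t E_j[ρ_{t,j} | α⁽ᵗ⁾]`, encoded by `ρmin ≤ E_j[ρ_{t,j} | ℱ t]` a.s. ∀ t.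
-/

open MeasureTheory Finset Real Set
open scoped RealInnerProductSpace BigOperators

noncomputable section

/-- `A α`, viewed as a vector of the Euclidean space `ℝ^d`. -/
def Amul {d n : ℕ} (A : Matrix (Fin d) (Fin n) ℝ) (x : Fin n → ℝ) :
    EuclideanSpace ℝ (Fin d) := WithLp.toLp 2 (fun j => ∑ i, A j i * x i)

/-- The `i`-th column `aᵢ` of `A`. -/
def col {d n : ℕ} (A : Matrix (Fin d) (Fin n) ℝ) (i : Fin n) :
    EuclideanSpace ℝ (Fin d) := WithLp.toLp 2 (fun j => A j i)

/-- The convex (Fenchel) conjugate of `g : ℝ → ℝ`. -/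
def conj (g : ℝ → ℝ) (x : ℝ) : ℝ := ⨆ u : ℝ, x * u - g u

/-- The objective `O(α) := f(Aα) + Σᵢ gᵢ(αᵢ)`. -/
def Obj {d n : ℕ} (A : Matrix (Fin d) (Fin n) ℝ) (f : EuclideanSpace ℝ (Fin d) → ℝ)
    (g : Fin n → ℝ → ℝ) (α : Fin n → ℝ) : ℝ := f (Amul A α) + ∑ i, g i (α i)

/-- Coordinate-wise duality gap `gapᵢ(αᵢ) := wᵀaᵢ αᵢ + gᵢ(αᵢ) + gᵢ*(−aᵢᵀw)`,
`w := ∇f(Aα)` (`f'` is the gradient of `f`). -/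
def coordGap {d n : ℕ} (A : Matrix (Fin d) (Fin n) ℝ)
    (f' : EuclideanSpace ℝ (Fin d) → EuclideanSpace ℝ (Fin d)) (g : Fin n → ℝ → ℝ)
    (α : Fin n → ℝ) (i : Fin n) : ℝ :=
  ⟪f' (Amul A α), col A i⟫ * α i + g i (α i) + conj (g i) (-⟪f' (Amul A α), col A i⟫)

/-- `ρ_{t,j} := gap_j(α_j) / ((1/n) Σ_{i∈[n]} gapᵢ(αᵢ))`. -/
def rhoCoord {d n : ℕ} (A : Matrix (Fin d) (Fin n) ℝ)
    (f' : EuclideanSpace ℝ (Fin d) → EuclideanSpace ℝ (Fin d)) (g : Fin n → ℝ → ℝ)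
    (α : Fin n → ℝ) (j : Fin n) : ℝ :=
  coordGap A f' g α j / ((1 / (n : ℝ)) * ∑ i, coordGap A f' g α i)

/-!
With `s = μ / (μ + L R²)` and `w = ∇f(Aα)`, exact minimisation along coordinate `j` is at least as
good as the step `α_j ↦ α_j + s (u - α_j)`, for every `u`. For this `s` the curvature
`L ‖a_j‖² s²` of `f` along `a_j` is absorbed by the strong-convexity term `μ s (1 - s)` of `g_j`,
and the supremum over `u` of `-⟨w, a_j⟩ u - g_j u` is `g_j*(-⟨w, a_j⟩)`: a round decreases `O` by
at least `s · gap_j(α)`. Weak duality (convexity of `f` and Fenchel–Young) bounds `ε` by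
`Σᵢ gapᵢ(α)`. Writing `gap_j = (1/n Σᵢ gapᵢ) · ρ_j` and pulling the `α⁽ᵗ⁾`-measurable mean gap out
of the conditional expectation gives `E ε⁽ᵗ⁺¹⁾ ≤ (1 - ρ_min s / n) E ε⁽ᵗ⁾`, which is iterated.
-/

open Function

section Conjugate

variable {g : ℝ → ℝ} {μ : ℝ}

lemma continuous_of_convexOn_sub_sq (hg : ConvexOn ℝ univ fun x => g x - μ / 2 * x ^ 2) :
    Continuous g := by
  have hsq : Continuous fun x : ℝ => μ / 2 * x ^ 2 := by fun_prop
  exact (hg.locallyLipschitz.continuous.add hsq).congr fun x => sub_add_cancel _ _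

lemma exists_affine_add_sq_le (hg : ConvexOn ℝ univ fun x => g x - μ / 2 * x ^ 2) :
    ∃ b c : ℝ, ∀ u, b * u + c + μ / 2 * u ^ 2 ≤ g u := by
  obtain ⟨b, c, h⟩ := hg.exists_affine_le_real isClosed_univ
    hg.locallyLipschitz.continuous.continuousOn.lowerSemicontinuousOn
  exact ⟨b, c, fun u => by linarith [h u (mem_univ u)]⟩

lemma bddAbove_range_mul_sub (hμ : 0 < μ) (hg : ConvexOn ℝ univ fun x => g x - μ / 2 * x ^ 2)
    (x : ℝ) : BddAbove (range fun u => x * u - g u) := by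
  obtain ⟨b, c, h⟩ := exists_affine_add_sq_le hg
  refine ⟨(x - b) ^ 2 / (2 * μ) - c, forall_mem_range.2 fun u => ?_⟩
  have hsq : 0 ≤ (μ * u - (x - b)) ^ 2 / (2 * μ) := by positivity
  have hexpand : (μ * u - (x - b)) ^ 2 / (2 * μ) =
      μ / 2 * u ^ 2 - u * (x - b) + (x - b) ^ 2 / (2 * μ) := by
    field_simp
    ring
  linarith [h u]

lemma mul_sub_le_conj (hμ : 0 < μ) (hg : ConvexOn ℝ univ fun x => g x - μ / 2 * x ^ 2)
    (x u : ℝ) : x * u - g u ≤ conj g x :=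
  le_ciSup (bddAbove_range_mul_sub hμ hg x) u

lemma convexOn_conj (hμ : 0 < μ) (hg : ConvexOn ℝ univ fun x => g x - μ / 2 * x ^ 2) :
    ConvexOn ℝ univ (conj g) := by
  refine ⟨convex_univ, fun x _ y _ a b ha hb hab => ciSup_le fun u => ?_⟩
  have hx := mul_le_mul_of_nonneg_left (mul_sub_le_conj hμ hg x u) ha
  have hy := mul_le_mul_of_nonneg_left (mul_sub_le_conj hμ hg y u) hb
  simp only [smul_eq_mul]
  linear_combination hx + hy + g u * hab

lemma continuous_conj (hμ : 0 < μ) (hg : ConvexOn ℝ univ fun x => g x - μ / 2 * x ^ 2) :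
    Continuous (conj g) :=
  (convexOn_conj hμ hg).locallyLipschitz.continuous

end Conjugate

section Gradient

variable {E : Type*} [NormedAddCommGroup E] [InnerProductSpace ℝ E] [CompleteSpace E]
  {f : E → ℝ} {f' : E → E}

lemma HasGradientAt.hasDerivAt_add_smul {x v : E} {t : ℝ} {w : E}
    (hf : HasGradientAt f w (x + t • v)) :
    HasDerivAt (fun s : ℝ => f (x + s • v)) ⟪w, v⟫ t := by
  have hline : HasDerivAt (fun s : ℝ => x + s • v) v t := by
    simpa using ((hasDerivAt_id t).smul_const v).const_add x
  simpa [Function.comp_def] using hf.hasFDerivAt.comp_hasDerivAt t hline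

lemma ConvexOn.add_inner_sub_le_of_hasGradientAt (hconv : ConvexOn ℝ univ f) {x : E} {w : E}
    (hf : HasGradientAt f w x) (y : E) : f x + ⟪w, y - x⟫ ≤ f y := by
  have hline : ConvexOn ℝ univ fun s : ℝ => f (x + s • (y - x)) := by
    simpa [Function.comp_def, AffineMap.lineMap_apply, add_comm]
      using hconv.comp_affineMap (AffineMap.lineMap x y)
  have := hline.le_slope_of_hasDerivAt (mem_univ 0) (mem_univ 1) one_pos
    (HasGradientAt.hasDerivAt_add_smul (v := y - x) (t := 0) (by simpa using hf))
  simp only [slope_def_field, one_smul, add_sub_cancel, zero_smul, add_zero, sub_zero,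
    div_one] at this
  linarith

lemma apply_add_le_of_lipschitzWith_gradient {K : NNReal} (hf : ∀ x, HasGradientAt f (f' x) x)
    (hlip : LipschitzWith K f') (x v : E) :
    f (x + v) ≤ f x + ⟪f' x, v⟫ + K / 2 * ‖v‖ ^ 2 := by
  have hderiv (t : ℝ) : HasDerivAt (fun t => f (x + t • v) - f x - t * ⟪f' x, v⟫)
      (⟪f' (x + t • v), v⟫ - ⟪f' x, v⟫) t :=
    ((hf _).hasDerivAt_add_smul.sub_const (f x)).sub (hasDerivAt_mul_const _)
  have hderivB (t : ℝ) : HasDerivAt (fun t => K / 2 * t ^ 2 * ‖v‖ ^ 2) (K * t * ‖v‖ ^ 2) t :=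
    (((hasDerivAt_pow 2 t).const_mul (K / 2 : ℝ)).mul_const (‖v‖ ^ 2)).congr_deriv
      (by push_cast; ring)
  have hbound (t : ℝ) (ht : t ∈ Ico (0 : ℝ) 1) :
      ⟪f' (x + t • v), v⟫ - ⟪f' x, v⟫ ≤ K * t * ‖v‖ ^ 2 := by
    have hlip_t := hlip.norm_sub_le (x + t • v) x
    rw [add_sub_cancel_left, norm_smul, Real.norm_of_nonneg ht.1] at hlip_t
    calc ⟪f' (x + t • v), v⟫ - ⟪f' x, v⟫ = ⟪f' (x + t • v) - f' x, v⟫ := (inner_sub_left ..).symm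
      _ ≤ ‖f' (x + t • v) - f' x‖ * ‖v‖ := real_inner_le_norm _ _
      _ ≤ K * (t * ‖v‖) * ‖v‖ := by gcongr
      _ = K * t * ‖v‖ ^ 2 := by ring
  have key := image_le_of_deriv_right_le_deriv_boundary
    (fun t _ => (hderiv t).continuousAt.continuousWithinAt)
    (fun t _ => (hderiv t).hasDerivWithinAt) (by simp)
    (fun t _ => (hderivB t).continuousAt.continuousWithinAt)
    (fun t _ => (hderivB t).hasDerivWithinAt) hbound (right_mem_Icc.2 zero_le_one)
  simp only [one_smul, one_mul, one_pow, mul_one, tsub_le_iff_right] at key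
  linarith

end Gradient

lemma Finset.sum_apply_update {ι β M : Type*} [Fintype ι] [DecidableEq ι] [AddCommGroup M]
    (F : ι → β → M) (α : ι → β) (j : ι) (z : β) :
    ∑ i, F i (update α j z i) = ∑ i, F i (α i) + (F j z - F j (α j)) := by
  rw [Finset.sum_congr rfl fun i _ => apply_update F α j z i,
    Finset.sum_update_of_mem (mem_univ j),
    Finset.sum_eq_add_sum_sdiff_singleton_of_mem (mem_univ j) fun i => F i (α i)]
  abel

section Objective

variable {d n : ℕ} (A : Matrix (Fin d) (Fin n) ℝ)

lemma inner_Amul (w : EuclideanSpace ℝ (Fin d)) (β : Fin n → ℝ) :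
    ⟪w, Amul A β⟫ = ∑ i, ⟪w, col A i⟫ * β i := by
  simp only [PiLp.inner_apply, RCLike.inner_apply, conj_trivial, Amul, col, Finset.sum_mul]
  rw [Finset.sum_comm]
  exact Finset.sum_congr rfl fun _ _ => Finset.sum_congr rfl fun _ _ => by ring

lemma Amul_update (α : Fin n → ℝ) (j : Fin n) (z : ℝ) :
    Amul A (update α j z) = Amul A α + (z - α j) • col A j := by
  ext k
  simp only [Amul, col, PiLp.add_apply, PiLp.smul_apply, smul_eq_mul]
  rw [Finset.sum_apply_update (fun i x => A k i * x)]
  ring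

lemma continuous_Amul : Continuous (Amul A) :=
  (PiLp.continuous_toLp 2 _).comp (by fun_prop)

variable (f : EuclideanSpace ℝ (Fin d) → ℝ) (g : Fin n → ℝ → ℝ)

lemma Obj_update (α : Fin n → ℝ) (j : Fin n) (z : ℝ) :
    Obj A f g (update α j z) =
      f (Amul A α + (z - α j) • col A j) + ∑ i, g i (α i) + (g j z - g j (α j)) := by
  rw [Obj, Amul_update, Finset.sum_apply_update g, add_assoc]

end Objective

section CoordinateDescent

variable {d n : ℕ} {A : Matrix (Fin d) (Fin n) ℝ} {f : EuclideanSpace ℝ (Fin d) → ℝ}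
  {f' : EuclideanSpace ℝ (Fin d) → EuclideanSpace ℝ (Fin d)} {g : Fin n → ℝ → ℝ} {μ : ℝ}

lemma coordGap_nonneg (hμ : 0 < μ) (hg : ∀ i, ConvexOn ℝ univ fun x => g i x - μ / 2 * x ^ 2)
    (α : Fin n → ℝ) (i : Fin n) : 0 ≤ coordGap A f' g α i := by
  have := mul_sub_le_conj hμ (hg i) (-⟪f' (Amul A α), col A i⟫) (α i)
  rw [coordGap]
  linarith

variable (A) in
lemma Obj_sub_le_sum_coordGap (hμ : 0 < μ) (hfconv : ConvexOn ℝ univ f)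
    (hfgrad : ∀ x, HasGradientAt f (f' x) x)
    (hg : ∀ i, ConvexOn ℝ univ fun x => g i x - μ / 2 * x ^ 2) (α β : Fin n → ℝ) :
    Obj A f g α - Obj A f g β ≤ ∑ i, coordGap A f' g α i := by
  set w := f' (Amul A α)
  have hf := hfconv.add_inner_sub_le_of_hasGradientAt (hfgrad (Amul A α)) (Amul A β)
  rw [inner_sub_right, inner_Amul, inner_Amul] at hf
  have hconj : ∑ i, (-⟪w, col A i⟫ * β i - g i (β i)) ≤ ∑ i, conj (g i) (-⟪w, col A i⟫) :=
    Finset.sum_le_sum fun i _ => mul_sub_le_conj hμ (hg i) _ _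
  simp only [Obj, coordGap, Finset.sum_add_distrib, Finset.sum_sub_distrib, neg_mul,
    Finset.sum_neg_distrib] at hconj ⊢
  linarith

lemma Obj_update_le {K : NNReal} (hfgrad : ∀ x, HasGradientAt f (f' x) x)
    (hflip : LipschitzWith K f') {j : Fin n} (hg : ConvexOn ℝ univ fun x => g j x - μ / 2 * x ^ 2)
    {s : ℝ} (hs0 : 0 ≤ s) (hs1 : s ≤ 1) (hsK : K * ‖col A j‖ ^ 2 * s ≤ μ * (1 - s))
    (α : Fin n → ℝ) (u : ℝ) :
    Obj A f g (update α j (α j + s * (u - α j))) ≤ Obj A f g α - s *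
      (⟪f' (Amul A α), col A j⟫ * α j + g j (α j) + (-⟪f' (Amul A α), col A j⟫ * u - g j u)) := by
  have hsc : StrongConvexOn univ μ (g j) := by
    rw [strongConvexOn_iff_convex]
    simpa only [Real.norm_eq_abs, sq_abs] using hg
  have hgz := hsc.2 (mem_univ u) (mem_univ (α j)) hs0 (sub_nonneg.2 hs1) (add_sub_cancel s 1)
  simp only [smul_eq_mul, Real.norm_eq_abs, sq_abs] at hgz
  have hf :=
    apply_add_le_of_lipschitzWith_gradient hfgrad hflip (Amul A α) ((s * (u - α j)) • col A j)
  rw [real_inner_smul_right, norm_smul, Real.norm_eq_abs, mul_pow, sq_abs] at hf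
  have hquad := mul_le_mul_of_nonneg_right hsK (by positivity : 0 ≤ s * (u - α j) ^ 2 / 2)
  rw [Obj_update, Obj, add_sub_cancel_left]
  have hz : α j + s * (u - α j) = s * u + (1 - s) * α j := by ring
  rw [hz]
  linarith

lemma Obj_le_sub_mul_coordGap {L R : ℝ} (hL : 0 ≤ L) (hμ : 0 < μ)
    (hfgrad : ∀ x, HasGradientAt f (f' x) x) (hflip : LipschitzWith L.toNNReal f') {j : Fin n}
    (hg : ConvexOn ℝ univ fun x => g j x - μ / 2 * x ^ 2) (hR : ‖col A j‖ ≤ R)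
    {α β : Fin n → ℝ} (hβ : ∀ x, Obj A f g β ≤ Obj A f g (update α j x)) :
    Obj A f g β ≤ Obj A f g α - μ / (μ + L * R ^ 2) * coordGap A f' g α j := by
  set s := μ / (μ + L * R ^ 2)
  have hden : 0 < μ + L * R ^ 2 := by positivity
  have hs0 : 0 < s := by positivity
  have hs1 : s ≤ 1 := div_le_one_of_le₀ (le_add_of_nonneg_right (by positivity)) hden.le
  have hsK : L.toNNReal * ‖col A j‖ ^ 2 * s ≤ μ * (1 - s) := by
    have hLR : L * R ^ 2 * s = μ * (1 - s) := by
      simp only [s]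
      field_simp
      ring
    rw [Real.coe_toNNReal L hL, ← hLR]
    gcongr
  set q := ⟪f' (Amul A α), col A j⟫
  have hconj : conj (g j) (-q) ≤ (Obj A f g α - Obj A f g β - s * (q * α j + g j (α j))) / s := by
    refine ciSup_le fun u => (le_div_iff₀' hs0).2 ?_
    linarith [(hβ _).trans (Obj_update_le hfgrad hflip hg hs0.le hs1 hsK α u)]
  have := (le_div_iff₀' hs0).1 hconj
  rw [coordGap]
  linarith

lemma continuous_coordGap (hμ : 0 < μ) (hf' : Continuous f')
    (hg : ∀ i, ConvexOn ℝ univ fun x => g i x - μ / 2 * x ^ 2) (i : Fin n) :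
    Continuous fun α => coordGap A f' g α i := by
  have hq : Continuous fun α => ⟪f' (Amul A α), col A i⟫ :=
    (hf'.comp (continuous_Amul A)).inner continuous_const
  exact (hq.mul (continuous_apply i)).add
    ((continuous_of_convexOn_sub_sq (hg i)).comp (continuous_apply i)) |>.add
    ((continuous_conj hμ (hg i)).comp hq.neg)

variable (A f' g) in
def meanGap (α : Fin n → ℝ) : ℝ := 1 / (n : ℝ) * ∑ i, coordGap A f' g α i

lemma natCast_mul_meanGap (α : Fin n → ℝ) : n * meanGap A f' g α = ∑ i, coordGap A f' g α i := by
  rcases n.eq_zero_or_pos with rfl | hn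
  · simp
  · rw [meanGap, ← mul_assoc, mul_one_div_cancel (by positivity), one_mul]

lemma continuous_meanGap (hμ : 0 < μ) (hf' : Continuous f')
    (hg : ∀ i, ConvexOn ℝ univ fun x => g i x - μ / 2 * x ^ 2) :
    Continuous (meanGap A f' g) :=
  continuous_const.mul (continuous_finsetSum _ fun i _ => continuous_coordGap hμ hf' hg i)

lemma meanGap_nonneg (hμ : 0 < μ) (hg : ∀ i, ConvexOn ℝ univ fun x => g i x - μ / 2 * x ^ 2)
    (α : Fin n → ℝ) : 0 ≤ meanGap A f' g α :=
  mul_nonneg (by positivity) (Finset.sum_nonneg fun i _ => coordGap_nonneg hμ hg α i)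

lemma coordGap_le_natCast_mul_meanGap (hμ : 0 < μ)
    (hg : ∀ i, ConvexOn ℝ univ fun x => g i x - μ / 2 * x ^ 2) (α : Fin n → ℝ) (j : Fin n) :
    coordGap A f' g α j ≤ n * meanGap A f' g α := by
  rw [natCast_mul_meanGap]
  exact Finset.single_le_sum (fun i _ => coordGap_nonneg hμ hg α i) (mem_univ j)

lemma rhoCoord_nonneg (hμ : 0 < μ) (hg : ∀ i, ConvexOn ℝ univ fun x => g i x - μ / 2 * x ^ 2)
    (α : Fin n → ℝ) (j : Fin n) : 0 ≤ rhoCoord A f' g α j :=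
  div_nonneg (coordGap_nonneg hμ hg α j) (meanGap_nonneg hμ hg α)

lemma rhoCoord_le (hμ : 0 < μ) (hg : ∀ i, ConvexOn ℝ univ fun x => g i x - μ / 2 * x ^ 2)
    (α : Fin n → ℝ) (j : Fin n) : rhoCoord A f' g α j ≤ n :=
  div_le_of_le_mul₀ (meanGap_nonneg hμ hg α) n.cast_nonneg
    (coordGap_le_natCast_mul_meanGap hμ hg α j)

lemma measurable_rhoCoord (hμ : 0 < μ) (hf' : Continuous f')
    (hg : ∀ i, ConvexOn ℝ univ fun x => g i x - μ / 2 * x ^ 2) (j : Fin n) :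
    Measurable fun α => rhoCoord A f' g α j :=
  (continuous_coordGap hμ hf' hg j).measurable.div (continuous_meanGap hμ hf' hg).measurable

lemma meanGap_mul_rhoCoord (hμ : 0 < μ) (hg : ∀ i, ConvexOn ℝ univ fun x => g i x - μ / 2 * x ^ 2)
    (α : Fin n → ℝ) (j : Fin n) : meanGap A f' g α * rhoCoord A f' g α j = coordGap A f' g α j := by
  -- `rhoCoord` divides by the mean gap; when that vanishes, so does every gap.
  refine mul_comm _ _ |>.trans <| div_mul_cancel_of_imp fun h => ?_
  have := coordGap_le_natCast_mul_meanGap (A := A) (f' := f') hμ hg α j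
  rw [show meanGap A f' g α = 0 from h, mul_zero] at this
  exact le_antisymm this (coordGap_nonneg hμ hg α j)

end CoordinateDescent

lemma Measurable.apply_of_countable {α X ι β : Type*} [MeasurableSpace α] [MeasurableSpace X]
    [MeasurableSpace ι] [Countable ι] [MeasurableSingletonClass ι] [MeasurableSpace β]
    {F : X → ι → β} (hF : ∀ i, Measurable fun x => F x i) {a : α → X} {j : α → ι}
    (ha : Measurable a) (hj : Measurable j) : Measurable fun ω => F (a ω) (j ω) :=
  (measurable_from_prod_countable_left (f := fun p : X × ι => F p.1 p.2) hF).comp (ha.prodMk hj)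

section Expectation

variable {Ω : Type*} {m m0 : MeasurableSpace Ω} {P : Measure Ω} [IsFiniteMeasure P]

lemma le_of_le_condExp [NeZero P] (hm : m ≤ m0) {X : Ω → ℝ} {a b : ℝ} (hX : Integrable X P)
    (hXb : ∀ ω, X ω ≤ b) (ha : ∀ᵐ ω ∂P, a ≤ P[X|m] ω) : a ≤ b := by
  have hb : P[X|m] ≤ᵐ[P] P[fun _ => b|m] := condExp_mono hX (integrable_const b) (.of_forall hXb)
  rw [condExp_const hm] at hb
  obtain ⟨ω, haω, hbω⟩ := (ha.and hb).exists
  exact haω.trans hbω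

lemma integral_le_one_sub_mul_integral (hm : m ≤ m0) {ε ε' M ρ : Ω → ℝ} {s c N : ℝ}
    (hs : 0 < s) (hc : 0 ≤ c) (hN : 0 < N) (hε : Integrable ε P) (hε' : Integrable ε' P)
    (hM : StronglyMeasurable[m] M) (hM0 : 0 ≤ M) (hρ : Integrable ρ P) (hρ0 : 0 ≤ ρ)
    (hdec : ∀ ω, ε' ω ≤ ε ω - s * (M ω * ρ ω)) (hεM : ∀ ω, ε ω ≤ N * M ω)
    (hcρ : ∀ᵐ ω ∂P, c ≤ P[ρ|m] ω) :
    ∫ ω, ε' ω ∂P ≤ (1 - c * s / N) * ∫ ω, ε ω ∂P := by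
  have hMρ : Integrable (fun ω => M ω * ρ ω) P := by
    refine ((hε.sub hε').const_mul s⁻¹).mono' ((hM.mono hm).aestronglyMeasurable.mul hρ.1)
      (.of_forall fun ω => ?_)
    rw [Real.norm_of_nonneg (mul_nonneg (hM0 ω) (hρ0 ω)), Pi.sub_apply, le_inv_mul_iff₀ hs]
    linarith [hdec ω]
  have hlower : c / N * ∫ ω, ε ω ∂P ≤ ∫ ω, M ω * ρ ω ∂P := by
    calc c / N * ∫ ω, ε ω ∂P = ∫ ω, c / N * ε ω ∂P := (integral_const_mul _ _).symm
      _ ≤ ∫ ω, P[M * ρ|m] ω ∂P := by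
        refine integral_mono_ae (hε.const_mul _) integrable_condExp ?_
        filter_upwards [condExp_mul_of_stronglyMeasurable_left hM hMρ hρ, hcρ] with ω hpull hcω
        rw [hpull, Pi.mul_apply]
        calc c / N * ε ω ≤ c / N * (N * M ω) := by gcongr; exact hεM ω
          _ = c * M ω := by field_simp
          _ ≤ M ω * P[ρ|m] ω := by rw [mul_comm]; gcongr; exact hM0 ω
      _ = ∫ ω, M ω * ρ ω ∂P := integral_condExp hm
  have hsub : ∫ ω, (ε ω - s * (M ω * ρ ω)) ∂P = ∫ ω, ε ω ∂P - s * ∫ ω, M ω * ρ ω ∂P := by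
    rw [integral_sub hε (hMρ.const_mul s), integral_const_mul]
  have hsc := mul_le_mul_of_nonneg_left hlower hs.le
  calc ∫ ω, ε' ω ∂P ≤ ∫ ω, (ε ω - s * (M ω * ρ ω)) ∂P :=
        integral_mono hε' (hε.sub (hMρ.const_mul s)) hdec
    _ = ∫ ω, ε ω ∂P - s * ∫ ω, M ω * ρ ω ∂P := hsub
    _ ≤ ∫ ω, ε ω ∂P - s * (c / N * ∫ ω, ε ω ∂P) := by linarith
    _ = (1 - c * s / N) * ∫ ω, ε ω ∂P := by ring

end Expectation

section RandomizedCoordinateDescent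

variable {d n : ℕ} {A : Matrix (Fin d) (Fin n) ℝ} {f : EuclideanSpace ℝ (Fin d) → ℝ}
  {f' : EuclideanSpace ℝ (Fin d) → EuclideanSpace ℝ (Fin d)} {g : Fin n → ℝ → ℝ} {μ : ℝ}
  {Ω : Type*} {m m0 : MeasurableSpace Ω} {P : Measure Ω} [IsFiniteMeasure P]

lemma integrable_rhoCoord_comp (hμ : 0 < μ) (hf' : Continuous f')
    (hg : ∀ i, ConvexOn ℝ univ fun x => g i x - μ / 2 * x ^ 2) {α : Ω → Fin n → ℝ}
    {j : Ω → Fin n} (hα : Measurable α) (hj : Measurable j) :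
    Integrable (fun ω => rhoCoord A f' g (α ω) (j ω)) P := by
  refine .of_bound (Measurable.apply_of_countable (measurable_rhoCoord hμ hf' hg) hα hj
    |>.aestronglyMeasurable) n (.of_forall fun ω => ?_)
  rw [Real.norm_of_nonneg (rhoCoord_nonneg hμ hg _ _)]
  exact rhoCoord_le hμ hg _ _

lemma integral_Obj_sub_le_of_forall_le_update (hm : m ≤ m0) (hn : 0 < n) {L R c : ℝ}
    (hL : 0 ≤ L) (hμ : 0 < μ) (hfconv : ConvexOn ℝ univ f)
    (hfgrad : ∀ x, HasGradientAt f (f' x) x) (hflip : LipschitzWith L.toNNReal f')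
    (hg : ∀ i, ConvexOn ℝ univ fun x => g i x - μ / 2 * x ^ 2) (hR : ∀ i, ‖col A i‖ ≤ R)
    {α α' : Ω → Fin n → ℝ} {j : Ω → Fin n} (hα : Measurable[m] α) (hj : Measurable j)
    (hα' : ∀ ω x, Obj A f g (α' ω) ≤ Obj A f g (update (α ω) (j ω) x))
    (hint : Integrable (fun ω => Obj A f g (α ω)) P)
    (hint' : Integrable (fun ω => Obj A f g (α' ω)) P) (hc : 0 ≤ c)
    (hcρ : ∀ᵐ ω ∂P, c ≤ P[fun ω => rhoCoord A f' g (α ω) (j ω)|m] ω) (β : Fin n → ℝ) :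
    ∫ ω, (Obj A f g (α' ω) - Obj A f g β) ∂P ≤
      (1 - c * (μ / (μ + L * R ^ 2)) / n) * ∫ ω, (Obj A f g (α ω) - Obj A f g β) ∂P :=
  integral_le_one_sub_mul_integral hm (by positivity) hc (Nat.cast_pos.2 hn)
    (hint.sub (integrable_const _)) (hint'.sub (integrable_const _))
    (M := fun ω => meanGap A f' g (α ω))
    ((continuous_meanGap hμ hflip.continuous hg).measurable.comp hα).stronglyMeasurable
    (fun ω => meanGap_nonneg hμ hg _)
    (integrable_rhoCoord_comp hμ hflip.continuous hg (hα.mono hm le_rfl) hj)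
    (fun ω => rhoCoord_nonneg hμ hg _ _)
    (fun ω => by
      rw [meanGap_mul_rhoCoord hμ hg]
      linarith [Obj_le_sub_mul_coordGap hL hμ hfgrad hflip (hg _) (hR _) (hα' ω)])
    (fun ω => by
      rw [natCast_mul_meanGap]
      linarith [Obj_sub_le_sum_coordGap A hμ hfconv hfgrad hg (α ω) β])
    hcρ

end RandomizedCoordinateDescent

theorem stmt_6_general
    {d n : ℕ}
    (A : Matrix (Fin d) (Fin n) ℝ)
    (f : EuclideanSpace ℝ (Fin d) → ℝ)
    (f' : EuclideanSpace ℝ (Fin d) → EuclideanSpace ℝ (Fin d))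
    (L μ R ρmin : ℝ) (hL : 0 < L) (hμ : 0 < μ)
    -- `f` is convex and `L`-smooth (differentiable with `L`-Lipschitz gradient `f'`)
    (hfconv : ConvexOn ℝ Set.univ f)
    (hfgrad : ∀ x, HasGradientAt f (f' x) x)
    (hflip : LipschitzWith L.toNNReal f')
    -- each `gᵢ` is `μ`-strongly convex
    (g : Fin n → ℝ → ℝ)
    (hg : ∀ i, ConvexOn ℝ Set.univ (fun x => g i x - μ / 2 * x ^ 2))
    -- the column norms are bounded by `R`
    (hR : ∀ i, ‖col A i‖ ≤ R)
    -- the probability space carrying the randomized coordinate choices, with filtration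
    {Ω : Type*} [m0 : MeasurableSpace Ω] (ℙ : Measure Ω) [IsProbabilityMeasure ℙ]
    (ℱ : Filtration ℕ m0)
    (jj : ℕ → Ω → Fin n) (alph : ℕ → Ω → Fin n → ℝ)
    (hadapt : ∀ t, @Measurable Ω (Fin n) (ℱ (t + 1)) ⊤ (jj t))
    (halph : ∀ t, @Measurable Ω (Fin n → ℝ) (ℱ t) _ (alph t))
    -- exact coordinate descent: `α⁽⁰⁾ = 0`, in round `t` the coordinate `jⱼ` is updated
    -- by exact minimization over that coordinate
    (h0 : ∀ ω, alph 0 ω = 0)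
    (hexact : ∀ t ω, ∀ x : ℝ,
      Obj A f g (alph (t + 1) ω) ≤ Obj A f g (Function.update (alph t ω) (jj t ω) x))
    -- `α⋆` is a minimizer of the objective
    (astar : Fin n → ℝ) (hstar : ∀ β, Obj A f g astar ≤ Obj A f g β)
    (hint : ∀ t, Integrable (fun ω => Obj A f g (alph t ω)) ℙ)
    -- `ρmin ≤ E_j[ρ_{t,j} | α⁽ᵗ⁾]` for every round `t`
    (hρ : ∀ t, ∀ᵐ ω ∂ℙ,
      ρmin ≤ (ℙ[fun ω' => rhoCoord A f' g (alph t ω') (jj t ω') | ℱ t]) ω) :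
    ∀ t : ℕ,
      ∫ ω, (Obj A f g (alph t ω) - Obj A f g astar) ∂ℙ ≤
        (1 - ρmin * (μ / (μ + L * R ^ 2)) * (1 / (n : ℝ))) ^ t *
          (Obj A f g (fun _ => 0) - Obj A f g astar) := by
  have hn : 0 < n := Fin.pos (jj 0 (nonempty_of_isProbabilityMeasure ℙ).some)
  have hjj (t : ℕ) : Measurable (jj t) := (hadapt t).mono (ℱ.le _) le_top
  set s := μ / (μ + L * R ^ 2)
  have hs0 : 0 < s := by positivity
  have hs1 : s ≤ 1 := div_le_one_of_le₀ (le_add_of_nonneg_right (by positivity)) (by positivity)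
  have hstep (t : ℕ) : ∫ ω, (Obj A f g (alph (t + 1) ω) - Obj A f g astar) ∂ℙ ≤
      (1 - max ρmin 0 * s / n) * ∫ ω, (Obj A f g (alph t ω) - Obj A f g astar) ∂ℙ :=
    integral_Obj_sub_le_of_forall_le_update (ℱ.le t) hn hL.le hμ hfconv hfgrad hflip hg hR
      (halph t) (hjj t) (hexact t) (hint t) (hint (t + 1)) (le_max_right _ _)
      (by filter_upwards [hρ t, condExp_nonneg (.of_forall fun ω => rhoCoord_nonneg hμ hg _ _)]
          with ω h1 h2 using max_le h1 h2) astar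
  have hρmin : ρmin ≤ n := le_of_le_condExp (ℱ.le 0)
    (integrable_rhoCoord_comp hμ hflip.continuous hg ((halph 0).mono (ℱ.le 0) le_rfl) (hjj 0))
    (fun ω => rhoCoord_le hμ hg _ _) (hρ 0)
  have hc0 : 0 ≤ 1 - ρmin * s / n := by
    rw [sub_nonneg, div_le_one (by positivity)]
    nlinarith [mul_nonneg (sub_nonneg.2 hρmin) hs0.le, mul_nonneg n.cast_nonneg (sub_nonneg.2 hs1)]
  intro t
  rw [mul_one_div]
  have hdecay := le_geom (u := fun t => ∫ ω, (Obj A f g (alph t ω) - Obj A f g astar) ∂ℙ) hc0 t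
    fun k _ => (hstep k).trans <| by
      gcongr
      · exact integral_nonneg fun ω => sub_nonneg.2 (hstar _)
      · exact le_max_left _ _
  simp only [h0, integral_const, probReal_univ, smul_eq_mul, one_mul] at hdecay
  exact hdecay

theorem stmt_6
    {d n : ℕ} (hn : 0 < n)
    (A : Matrix (Fin d) (Fin n) ℝ)
    (f : EuclideanSpace ℝ (Fin d) → ℝ)
    (f' : EuclideanSpace ℝ (Fin d) → EuclideanSpace ℝ (Fin d))
    (L μ R ρmin : ℝ) (hL : 0 < L) (hμ : 0 < μ)
    -- `f` is convex and `L`-smooth (differentiable with `L`-Lipschitz gradient `f'`)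
    (hfconv : ConvexOn ℝ Set.univ f)
    (hfgrad : ∀ x, HasGradientAt f (f' x) x)
    (hflip : LipschitzWith L.toNNReal f')
    -- each `gᵢ` is `μ`-strongly convex
    (g : Fin n → ℝ → ℝ)
    (hg : ∀ i, ConvexOn ℝ Set.univ (fun x => g i x - μ / 2 * x ^ 2))
    -- the column norms are bounded by `R`
    (hR : ∀ i, ‖col A i‖ ≤ R)
    -- the probability space carrying the randomized coordinate choices, with filtration
    {Ω : Type*} [m0 : MeasurableSpace Ω] (ℙ : Measure Ω) [IsProbabilityMeasure ℙ]
    (ℱ : Filtration ℕ m0)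
    (jj : ℕ → Ω → Fin n) (alph : ℕ → Ω → Fin n → ℝ)
    (hadapt : ∀ t, @Measurable Ω (Fin n) (ℱ (t + 1)) ⊤ (jj t))
    (halph : ∀ t, @Measurable Ω (Fin n → ℝ) (ℱ t) _ (alph t))
    -- exact coordinate descent: `α⁽⁰⁾ = 0`, in round `t` the coordinate `jⱼ` is updated
    -- by exact minimization over that coordinate
    (h0 : ∀ ω, alph 0 ω = 0)
    (hsupp : ∀ t ω i, i ≠ jj t ω → alph (t + 1) ω i = alph t ω i)
    (hexact : ∀ t ω, ∀ x : ℝ,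
      Obj A f g (alph (t + 1) ω) ≤ Obj A f g (Function.update (alph t ω) (jj t ω) x))
    -- `α⋆` is a minimizer of the objective
    (astar : Fin n → ℝ) (hstar : ∀ β, Obj A f g astar ≤ Obj A f g β)
    (hint : ∀ t, Integrable (fun ω => Obj A f g (alph t ω)) ℙ)
    -- `ρmin ≤ E_j[ρ_{t,j} | α⁽ᵗ⁾]` for every round `t`
    (hρ : ∀ t, ∀ᵐ ω ∂ℙ,
      ρmin ≤ (ℙ[fun ω' => rhoCoord A f' g (alph t ω') (jj t ω') | ℱ t]) ω) :
    ∀ t : ℕ,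
      ∫ ω, (Obj A f g (alph t ω) - Obj A f g astar) ∂ℙ ≤
        (1 - ρmin * (μ / (μ + L * R ^ 2)) * (1 / (n : ℝ))) ^ t *
          (Obj A f g (fun _ => 0) - Obj A f g astar) :=
  stmt_6_general A f f' L μ R ρmin hL hμ hfconv hfgrad hflip g hg hR (m0 := m0) ℙ ℱ jj alph hadapt
    halph h0 hexact astar hstar hint hρ

end
end

section
/- (Per-step improvement with the quadratic local subproblem.) Let f be convex and L-smooth and define the local model Õ(α, v, Δα_[P]) := f(Aα) + ∇f(Aα)ᵀAΔα_[P] + (L/2)‖AΔα_[P]‖₂² + Σ_{i∈P} g_i((α + Δα_[P])_i) + Σ_{i∉P} g_i(α_i). If Δα_[P] (supported on P) is a θ-approximate solution of min over vectors s_[P] supported on P of Õ(α⁽ᵗ⁾, Aα⁽ᵗ⁾, s_[P]), i.e. Õ(α⁽ᵗ⁾, Aα⁽ᵗ⁾, Δα_[P]) ≤ θ·min_{s_[P]} Õ(α⁽ᵗ⁾, Aα⁽ᵗ⁾, s_[P]) + (1−θ)·Õ(α⁽ᵗ⁾, Aα⁽ᵗ⁾, 0), then O(α⁽ᵗ⁾)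 − O(α⁽ᵗ⁾ + Δα_[P]) ≥ θ·[ O(α⁽ᵗ⁾) − min_{s_[P]} Õ(α⁽ᵗ⁾, Aα⁽ᵗ⁾, s_[P]) ]. -/
/-!
Since `∇f` is `L`-Lipschitz, the descent lemma `f(x + y) ≤ f(x) + ⟪∇f(x), y⟫ + (L/2)‖y‖²`
shows that the local model majorizes the objective: `O(α + Δ) ≤ Õ(α, Aα, Δ)` for every `Δ`
supported on `P`, with equality `Õ(α, Aα, 0) = O(α)` at `Δ = 0`. Chaining the majorization
with the `θ`-approximation inequality gives `O(α + Δ) ≤ θ · min Õ + (1 − θ) · O(α)`, which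
rearranges to the claim.
-/

open Finset Set
open scoped RealInnerProductSpace BigOperators

noncomputable section

/-- The quadratic local model
`Õ(α, Aα, Δ) := f(Aα) + ∇f(Aα)ᵀAΔ + (L/2)‖AΔ‖² + Σ_{i∈P} gᵢ((α+Δ)ᵢ) + Σ_{i∉P} gᵢ(αᵢ)`
(`f'` is the gradient of `f`). -/
def Otil {d n : ℕ} (A : Matrix (Fin d) (Fin n) ℝ) (f : EuclideanSpace ℝ (Fin d) → ℝ)
    (f' : EuclideanSpace ℝ (Fin d) → EuclideanSpace ℝ (Fin d)) (g : Fin n → ℝ → ℝ)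
    (L : ℝ) (P : Finset (Fin n)) (α Δ : Fin n → ℝ) : ℝ :=
  f (Amul A α) + ⟪f' (Amul A α), Amul A Δ⟫ + L / 2 * ‖Amul A Δ‖ ^ 2 +
    ∑ i ∈ P, g i (α i + Δ i) + ∑ i ∈ Pᶜ, g i (α i)

section DescentLemma

variable {E : Type*} [NormedAddCommGroup E] [InnerProductSpace ℝ E]
  {f : E → ℝ} {f' : E → E} {K : NNReal}

theorem LipschitzWith.inner_sub_le_of_gradient (hflip : LipschitzWith K f') (x y : E) {t : ℝ}
    (ht : 0 ≤ t) : ⟪f' (x + t • y), y⟫ - ⟪f' x, y⟫ ≤ K * t * ‖y‖ ^ 2 := by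
  rw [← inner_sub_left]
  calc ⟪f' (x + t • y) - f' x, y⟫
      ≤ ‖f' (x + t • y) - f' x‖ * ‖y‖ := real_inner_le_norm _ _
    _ ≤ K * ‖(x + t • y) - x‖ * ‖y‖ := by gcongr; exact hflip.norm_sub_le _ _
    _ = K * t * ‖y‖ ^ 2 := by
      rw [add_sub_cancel_left, norm_smul, Real.norm_of_nonneg ht]; ring

/-- The descent lemma. -/
theorem LipschitzWith.apply_add_le_of_hasGradientAt [CompleteSpace E]
    (hflip : LipschitzWith K f') (hfgrad : ∀ x, HasGradientAt f (f' x) x) (x y : E) :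
    f (x + y) ≤ f x + ⟪f' x, y⟫ + K / 2 * ‖y‖ ^ 2 := by
  -- `φ` is the gap between `f` and its quadratic upper model along the segment `x + t • y`.
  let φ : ℝ → ℝ := fun t => f (x + t • y) - t * ⟪f' x, y⟫ - K / 2 * t ^ 2 * ‖y‖ ^ 2
  have hφ : ∀ t, HasDerivAt φ (⟪f' (x + t • y), y⟫ - ⟪f' x, y⟫ - K * t * ‖y‖ ^ 2) t := by
    intro t
    have hline : HasDerivAt (fun t : ℝ => x + t • y) y t := by
      simpa using ((hasDerivAt_id t).smul_const y).const_add x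
    have hf : HasDerivAt (fun t : ℝ => f (x + t • y)) ⟪f' (x + t • y), y⟫ t := by
      have h := (hfgrad (x + t • y)).hasFDerivAt.comp_hasDerivAt t hline
      simp only [InnerProductSpace.toDual_apply_apply] at h
      exact h
    have hquad : HasDerivAt (fun t : ℝ => K / 2 * t ^ 2 * ‖y‖ ^ 2) (K * t * ‖y‖ ^ 2) t := by
      exact (((hasDerivAt_pow 2 t).const_mul ((K : ℝ) / 2)).mul_const _).congr_deriv (by ring_nf)
    exact (hf.sub ((hasDerivAt_id t).mul_const _)).sub hquad |>.congr_deriv (by simp)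
  have hanti : AntitoneOn φ (Icc 0 1) := by
    refine antitoneOn_of_hasDerivWithinAt_nonpos (convex_Icc 0 1)
      (HasDerivAt.continuousOn fun t _ => hφ t) (fun t _ => (hφ t).hasDerivWithinAt) ?_
    intro t ht
    rw [interior_Icc] at ht
    linarith [hflip.inner_sub_le_of_gradient x y ht.1.le]
  have h01 := hanti ⟨le_rfl, zero_le_one⟩ ⟨zero_le_one, le_rfl⟩ zero_le_one
  norm_num [φ] at h01
  linarith

end DescentLemma

section LocalModel

variable {d n : ℕ} (A : Matrix (Fin d) (Fin n) ℝ) (f : EuclideanSpace ℝ (Fin d) → ℝ)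
  (f' : EuclideanSpace ℝ (Fin d) → EuclideanSpace ℝ (Fin d)) (g : Fin n → ℝ → ℝ)
  (L : ℝ) (P : Finset (Fin n)) (α : Fin n → ℝ)

theorem Amul_add (x y : Fin n → ℝ) : Amul A (x + y) = Amul A x + Amul A y := by
  ext j
  simp [Amul, mul_add, Finset.sum_add_distrib]

theorem Amul_zero : Amul A (0 : Fin n → ℝ) = 0 := by
  ext j
  simp [Amul]

theorem Otil_zero : Otil A f f' g L P α 0 = Obj A f g α := by
  simp only [Otil, Obj, Amul_zero, inner_zero_right, norm_zero, Pi.zero_apply, add_zero]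
  rw [add_assoc, Finset.sum_add_sum_compl]
  ring

theorem Obj_add_le_Otil (hL : 0 ≤ L) (hfgrad : ∀ x, HasGradientAt f (f' x) x)
    (hflip : LipschitzWith L.toNNReal f') {Δ : Fin n → ℝ} (hΔ : ∀ i, i ∉ P → Δ i = 0) :
    Obj A f g (α + Δ) ≤ Otil A f f' g L P α Δ := by
  have hsum : ∑ i, g i ((α + Δ) i) = ∑ i ∈ P, g i (α i + Δ i) + ∑ i ∈ Pᶜ, g i (α i) := by
    rw [← Finset.sum_add_sum_compl P]
    congr 1
    refine Finset.sum_congr rfl fun i hi => ?_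
    rw [Pi.add_apply, hΔ i (Finset.mem_compl.mp hi), add_zero]
  have hdescent := hflip.apply_add_le_of_hasGradientAt hfgrad (Amul A α) (Amul A Δ)
  rw [Real.coe_toNNReal L hL] at hdescent
  rw [Obj, Otil, Amul_add, hsum]
  linarith

end LocalModel

theorem stmt_8_general
    {d n : ℕ}
    (A : Matrix (Fin d) (Fin n) ℝ)
    (f : EuclideanSpace ℝ (Fin d) → ℝ)
    (f' : EuclideanSpace ℝ (Fin d) → EuclideanSpace ℝ (Fin d))
    (L θ : ℝ) (hL : 0 < L)
    -- `f` is convex and `L`-smooth (differentiable with `L`-Lipschitz gradient `f'`)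
    (hfgrad : ∀ x, HasGradientAt f (f' x) x)
    (hflip : LipschitzWith L.toNNReal f')
    (g : Fin n → ℝ → ℝ)
    (P : Finset (Fin n)) (α : Fin n → ℝ)
    -- `Δα_[P]` is supported on `P` and is a `θ`-approximate solution of the local model
    (Δ : Fin n → ℝ) (hΔsupp : ∀ i, i ∉ P → Δ i = 0)
    (happrox :
      Otil A f f' g L P α Δ ≤
        θ * (⨅ s : {s : Fin n → ℝ // ∀ i, i ∉ P → s i = 0},
              Otil A f f' g L P α (s : Fin n → ℝ))
          + (1 - θ) * Otil A f f' g L P α 0) :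
    Obj A f g α - Obj A f g (α + Δ) ≥
      θ * (Obj A f g α -
        ⨅ s : {s : Fin n → ℝ // ∀ i, i ∉ P → s i = 0},
          Otil A f f' g L P α (s : Fin n → ℝ)) := by
  have hmaj := Obj_add_le_Otil A f f' g L P α hL.le hfgrad hflip hΔsupp
  rw [Otil_zero] at happrox
  linarith

theorem stmt_8
    {d n : ℕ}
    (A : Matrix (Fin d) (Fin n) ℝ)
    (f : EuclideanSpace ℝ (Fin d) → ℝ)
    (f' : EuclideanSpace ℝ (Fin d) → EuclideanSpace ℝ (Fin d))
    (L θ : ℝ) (hL : 0 < L) (hθ : θ ∈ Set.Ioc (0 : ℝ) 1)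
    -- `f` is convex and `L`-smooth (differentiable with `L`-Lipschitz gradient `f'`)
    (hfconv : ConvexOn ℝ Set.univ f)
    (hfgrad : ∀ x, HasGradientAt f (f' x) x)
    (hflip : LipschitzWith L.toNNReal f')
    -- each `gᵢ` is convex
    (g : Fin n → ℝ → ℝ) (hg : ∀ i, ConvexOn ℝ Set.univ (g i))
    (P : Finset (Fin n)) (α : Fin n → ℝ)
    -- `Δα_[P]` is supported on `P` and is a `θ`-approximate solution of the local model
    (Δ : Fin n → ℝ) (hΔsupp : ∀ i, i ∉ P → Δ i = 0)
    (happrox :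
      Otil A f f' g L P α Δ ≤
        θ * (⨅ s : {s : Fin n → ℝ // ∀ i, i ∉ P → s i = 0},
              Otil A f f' g L P α (s : Fin n → ℝ))
          + (1 - θ) * Otil A f f' g L P α 0) :
    Obj A f g α - Obj A f g (α + Δ) ≥
      θ * (Obj A f g α -
        ⨅ s : {s : Fin n → ℝ // ∀ i, i ∉ P → s i = 0},
          Otil A f f' g L P α (s : Fin n → ℝ)) :=
  stmt_8_general A f f' L θ hL hfgrad hflip g P α Δ hΔsupp happrox

end
end
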